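/- For all positive integers t and s, the complete bipartite graph K_{4t,4s+2} admits an almost 2-perfect 8-cycle decomposition. -/

import Mathlib

open Finset

/-- The edge set of the closed walk visiting `f 0, f 1, ..., f (m-1)` and back to `f 0`. -/
def cycleEdges {V : Type*} [DecidableEq V] (m : ℕ) (f : ℕ → V) : Finset (Sym2 V) :=
  (Finset.range m).image (fun i => s(f i, f ((i + 1) % m)))

/-- `f` describes an `m`-cycle: its first `m` values are pairwise distinct. -/
def IsCycleMap {V : Type*} (m : ℕ) (f : ℕ → V) : Prop :=
  Set.InjOn f ↑(Finset.range m)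

/-- Vertex set of the cycle described by `f`. -/
def cycleVerts {V : Type*} [DecidableEq V] (m : ℕ) (f : ℕ → V) : Finset V :=
  (Finset.range m).image f

/-- `g` is an inside `m`-cycle of `f`: same vertex set and edge-disjoint. -/
def IsInsideOf {V : Type*} [DecidableEq V] (m : ℕ) (g f : ℕ → V) : Prop :=
  IsCycleMap m g ∧ cycleVerts m g = cycleVerts m f ∧
    Disjoint (cycleEdges m f) (cycleEdges m g)

/-- Edge set of the complete graph on `V`. -/
def kEdges (V : Type*) [Fintype V] [DecidableEq V] : Finset (Sym2 V) :=
  Finset.univ.filter (fun e => ¬ e.IsDiag)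

/-- Edge set of the complete bipartite graph `K_{r,s}`. -/
def bipEdges (r s : ℕ) : Finset (Sym2 (Fin r ⊕ Fin s)) :=
  (Finset.univ : Finset (Fin r × Fin s)).image (fun p => s(Sum.inl p.1, Sum.inr p.2))

/-- `E` admits an almost 2-perfect 8-cycle decomposition. -/
def HasA2PDecomp {V : Type*} [DecidableEq V] (E : Finset (Sym2 V)) : Prop :=
  ∃ (k : ℕ) (c c' : Fin k → ℕ → V),
    (∀ i, IsCycleMap 8 (c i)) ∧
    (∀ i j, i ≠ j → Disjoint (cycleEdges 8 (c i)) (cycleEdges 8 (c j))) ∧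
    Finset.univ.sup (fun i => cycleEdges 8 (c i)) = E ∧
    (∀ i, IsInsideOf 8 (c' i) (c i)) ∧
    (∀ i j, i ≠ j → Disjoint (cycleEdges 8 (c' i)) (cycleEdges 8 (c' j))) ∧
    Finset.univ.sup (fun i => cycleEdges 8 (c' i)) = E

/-- `E` admits an almost 2-perfect 8-cycle packing with leave `L`. -/
def HasA2PPacking {V : Type*} [DecidableEq V] (E L : Finset (Sym2 V)) : Prop :=
  L ⊆ E ∧ ∃ (k : ℕ) (c c' : Fin k → ℕ → V),
    (∀ i, IsCycleMap 8 (c i)) ∧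
    (∀ i j, i ≠ j → Disjoint (cycleEdges 8 (c i)) (cycleEdges 8 (c j))) ∧
    Finset.univ.sup (fun i => cycleEdges 8 (c i)) = E \ L ∧
    (∀ i, IsInsideOf 8 (c' i) (c i)) ∧
    (∀ i j, i ≠ j → Disjoint (cycleEdges 8 (c' i)) (cycleEdges 8 (c' j))) ∧
    Finset.univ.sup (fun i => cycleEdges 8 (c' i)) = E \ L

/-- A 1-factor (perfect matching) as a set of edges. -/
def IsOneFactor {V : Type*} (L : Finset (Sym2 V)) : Prop :=
  (∀ e ∈ L, ¬ e.IsDiag) ∧ ∀ v : V, ∃! e, e ∈ L ∧ v ∈ e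

/-!
Almost 2-perfect 8-cycle decompositions survive injective relabelling of vertices and
edge-disjoint unions. Cutting the part of size `4t` into blocks of four, `K_{4t,4s+2}` is the
edge-disjoint union of `t` copies of `K_{4,4s+2}`; cutting the part of size `4s+2` into one block
of six and `s - 1` blocks of four, `K_{4,4s+2}` is the union of one `K_{4,6}` and `s - 1` copies
of `K_{4,4}`. For these two base graphs explicit decompositions are checked by
computation.
-/

theorem Fin.sup_univ_add {α : Type*} [SemilatticeSup α] [OrderBot α] {a b : ℕ}
    (f : Fin (a + b) → α) :
    univ.sup f =
      (univ.sup fun i => f (Fin.castAdd b i)) ⊔ univ.sup fun i => f (Fin.natAdd a i) := by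
  rw [← univ_map_equiv_to_embedding finSumFinEquiv, sup_map, ← univ_disjSum_univ, sup_disjSum]
  simp

section CycleDecomp

variable {V W : Type*}

theorem IsCycleMap.comp {m : ℕ} {f : ℕ → V} {φ : V → W} (hφ : Function.Injective φ)
    (hf : IsCycleMap m f) : IsCycleMap m (φ ∘ f) :=
  hφ.injOn.comp hf (Set.mapsTo_univ _ _)

variable [DecidableEq V] [DecidableEq W]

def IsCycleDecomp (m : ℕ) {k : ℕ} (c : Fin k → ℕ → V) (E : Finset (Sym2 V)) : Prop :=
  (∀ i, IsCycleMap m (c i)) ∧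
    Pairwise (fun i j => Disjoint (cycleEdges m (c i)) (cycleEdges m (c j))) ∧
    univ.sup (fun i => cycleEdges m (c i)) = E

theorem hasA2PDecomp_iff {E : Finset (Sym2 V)} :
    HasA2PDecomp E ↔ ∃ (k : ℕ) (c c' : Fin k → ℕ → V),
      IsCycleDecomp 8 c E ∧ IsCycleDecomp 8 c' E ∧ ∀ i, IsInsideOf 8 (c' i) (c i) := by
  constructor
  · rintro ⟨k, c, c', hc, hdisj, hsup, hin, hdisj', hsup'⟩
    exact ⟨k, c, c', ⟨hc, hdisj, hsup⟩, ⟨fun i => (hin i).1, hdisj', hsup'⟩, hin⟩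
  · rintro ⟨k, c, c', ⟨hc, hdisj, hsup⟩, ⟨-, hdisj', hsup'⟩, hin⟩
    exact ⟨k, c, c', hc, hdisj, hsup, hin, hdisj', hsup'⟩

theorem cycleEdges_comp (φ : V → W) (m : ℕ) (f : ℕ → V) :
    cycleEdges m (φ ∘ f) = (cycleEdges m f).image (Sym2.map φ) := by
  simp [cycleEdges, image_image, Function.comp_def]

theorem cycleVerts_comp (φ : V → W) (m : ℕ) (f : ℕ → V) :
    cycleVerts m (φ ∘ f) = (cycleVerts m f).image φ := by
  simp [cycleVerts, image_image]

theorem IsInsideOf.comp {m : ℕ} {g f : ℕ → V} {φ : V → W} (hφ : Function.Injective φ)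
    (h : IsInsideOf m g f) : IsInsideOf m (φ ∘ g) (φ ∘ f) := by
  obtain ⟨hg, hverts, hdisj⟩ := h
  refine ⟨hg.comp hφ, by rw [cycleVerts_comp, cycleVerts_comp, hverts], ?_⟩
  rwa [cycleEdges_comp, cycleEdges_comp, disjoint_image (Sym2.map.injective hφ)]

theorem IsCycleDecomp.comp {m k : ℕ} {c : Fin k → ℕ → V} {E : Finset (Sym2 V)} {φ : V → W}
    (hφ : Function.Injective φ) (h : IsCycleDecomp m c E) :
    IsCycleDecomp m (fun i => φ ∘ c i) (E.image (Sym2.map φ)) := by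
  obtain ⟨hc, hdisj, hsup⟩ := h
  refine ⟨fun i => (hc i).comp hφ, fun i j hij => ?_, ?_⟩
  · dsimp only
    rw [cycleEdges_comp, cycleEdges_comp, disjoint_image (Sym2.map.injective hφ)]
    exact hdisj hij
  · rw [← hsup, sup_eq_biUnion, sup_eq_biUnion, biUnion_image]
    simp only [cycleEdges_comp]

theorem IsCycleDecomp.append {m k₁ k₂ : ℕ} {c₁ : Fin k₁ → ℕ → V} {c₂ : Fin k₂ → ℕ → V}
    {E₁ E₂ : Finset (Sym2 V)} (h₁ : IsCycleDecomp m c₁ E₁) (h₂ : IsCycleDecomp m c₂ E₂)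
    (hE : Disjoint E₁ E₂) : IsCycleDecomp m (Fin.append c₁ c₂) (E₁ ∪ E₂) := by
  obtain ⟨hc₁, hdisj₁, hsup₁⟩ := h₁
  obtain ⟨hc₂, hdisj₂, hsup₂⟩ := h₂
  have hsub₁ (i) : cycleEdges m (c₁ i) ⊆ E₁ :=
    hsup₁ ▸ le_sup (f := fun i => cycleEdges m (c₁ i)) (mem_univ i)
  have hsub₂ (i) : cycleEdges m (c₂ i) ⊆ E₂ :=
    hsup₂ ▸ le_sup (f := fun i => cycleEdges m (c₂ i)) (mem_univ i)
  refine ⟨Fin.addCases (by simpa using hc₁) (by simpa using hc₂), fun i j hij => ?_, ?_⟩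
  · induction i using Fin.addCases <;> induction j using Fin.addCases <;>
      simp only [Fin.append_left, Fin.append_right] at hij ⊢
    · exact hdisj₁ (ne_of_apply_ne _ hij)
    · exact hE.mono (hsub₁ _) (hsub₂ _)
    · exact (hE.mono (hsub₁ _) (hsub₂ _)).symm
    · exact hdisj₂ (ne_of_apply_ne _ hij)
  · simp [Fin.sup_univ_add, hsup₁, hsup₂]

theorem hasA2PDecomp_empty : HasA2PDecomp (∅ : Finset (Sym2 V)) :=
  hasA2PDecomp_iff.2 ⟨0, Fin.elim0, Fin.elim0, ⟨fun i => i.elim0, fun i => i.elim0, rfl⟩,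
    ⟨fun i => i.elim0, fun i => i.elim0, rfl⟩, fun i => i.elim0⟩

theorem HasA2PDecomp.image {E : Finset (Sym2 V)} {φ : V → W} (hφ : Function.Injective φ)
    (h : HasA2PDecomp E) : HasA2PDecomp (E.image (Sym2.map φ)) := by
  obtain ⟨k, c, c', hc, hc', hin⟩ := hasA2PDecomp_iff.1 h
  exact hasA2PDecomp_iff.2 ⟨k, _, _, hc.comp hφ, hc'.comp hφ, fun i => (hin i).comp hφ⟩

theorem HasA2PDecomp.union {E₁ E₂ : Finset (Sym2 V)} (h₁ : HasA2PDecomp E₁)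
    (h₂ : HasA2PDecomp E₂) (hE : Disjoint E₁ E₂) : HasA2PDecomp (E₁ ∪ E₂) := by
  obtain ⟨k₁, c₁, c₁', hc₁, hc₁', hin₁⟩ := hasA2PDecomp_iff.1 h₁
  obtain ⟨k₂, c₂, c₂', hc₂, hc₂', hin₂⟩ := hasA2PDecomp_iff.1 h₂
  refine hasA2PDecomp_iff.2 ⟨k₁ + k₂, _, _, hc₁.append hc₂ hE, hc₁'.append hc₂' hE, ?_⟩
  exact Fin.addCases (by simpa using hin₁) (by simpa using hin₂)

end CycleDecomp

theorem bipEdges_zero_right (r : ℕ) : bipEdges r 0 = ∅ := by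
  simp [bipEdges]

theorem bipEdges_swap (r n : ℕ) : (bipEdges r n).image (Sym2.map Sum.swap) = bipEdges n r := by
  ext e
  simp only [bipEdges, image_image, mem_image, mem_univ, true_and, Prod.exists,
    Function.comp_def, Sym2.map_mk, Sum.swap_inl, Sum.swap_inr]
  constructor
  · rintro ⟨p, q, rfl⟩; exact ⟨q, p, Sym2.eq_swap⟩
  · rintro ⟨q, p, rfl⟩; exact ⟨p, q, Sym2.eq_swap⟩

theorem bipEdges_add_right (r a b : ℕ) :
    bipEdges r (a + b) =
      (bipEdges r a).image (Sym2.map (Sum.map id (Fin.castAdd b))) ∪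
        (bipEdges r b).image (Sym2.map (Sum.map id (Fin.natAdd a))) := by
  ext e
  simp only [bipEdges, image_image, mem_union, mem_image, mem_univ, true_and, Prod.exists,
    Function.comp_def, Sym2.map_mk, Sum.map_inl, Sum.map_inr, id_eq]
  constructor
  · rintro ⟨p, q, rfl⟩
    induction q using Fin.addCases with
    | left j => exact Or.inl ⟨p, j, rfl⟩
    | right j => exact Or.inr ⟨p, j, rfl⟩
  · rintro (⟨p, q, rfl⟩ | ⟨p, q, rfl⟩)
    exacts [⟨p, Fin.castAdd b q, rfl⟩, ⟨p, Fin.natAdd a q, rfl⟩]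

theorem disjoint_bipEdges_castAdd_natAdd (r a b : ℕ) :
    Disjoint ((bipEdges r a).image (Sym2.map (Sum.map id (Fin.castAdd b))))
      ((bipEdges r b).image (Sym2.map (Sum.map id (Fin.natAdd a)))) := by
  simp only [disjoint_left, bipEdges, image_image, mem_image, mem_univ, true_and, Prod.exists,
    Function.comp_def, Sym2.map_mk, Sum.map_inl, Sum.map_inr, id_eq, not_exists]
  rintro _ ⟨p, q, rfl⟩ p' q' h
  rw [Sym2.eq_iff] at h
  rcases h with ⟨-, h⟩ | ⟨h, -⟩
  · have := congrArg Fin.val (Sum.inr_injective h)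
    simp only [Fin.val_natAdd, Fin.val_castAdd] at this
    omega
  · simp at h

theorem HasA2PDecomp.bipEdges_swap {r n : ℕ} (h : HasA2PDecomp (bipEdges r n)) :
    HasA2PDecomp (bipEdges n r) :=
  _root_.bipEdges_swap r n ▸ h.image Sum.swap_leftInverse.injective

theorem HasA2PDecomp.bipEdges_add_right {r a b : ℕ} (ha : HasA2PDecomp (bipEdges r a))
    (hb : HasA2PDecomp (bipEdges r b)) : HasA2PDecomp (bipEdges r (a + b)) := by
  rw [_root_.bipEdges_add_right]
  exact (ha.image (Function.injective_id.sumMap (Fin.castAdd_injective a b))).union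
    (hb.image (Function.injective_id.sumMap (Fin.natAdd_injective b a)))
    (disjoint_bipEdges_castAdd_natAdd r a b)

theorem HasA2PDecomp.bipEdges_mul_right {r n : ℕ} (h : HasA2PDecomp (bipEdges r n)) (k : ℕ) :
    HasA2PDecomp (bipEdges r (n * k)) := by
  induction k with
  | zero => simpa [bipEdges_zero_right] using hasA2PDecomp_empty
  | succ k ih => exact ih.bipEdges_add_right h

theorem HasA2PDecomp.bipEdges_mul_left {r n : ℕ} (h : HasA2PDecomp (bipEdges r n)) (k : ℕ) :
    HasA2PDecomp (bipEdges (r * k) n) :=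
  (h.bipEdges_swap.bipEdges_mul_right k).bipEdges_swap

instance {V : Type*} [DecidableEq V] (m : ℕ) (f : ℕ → V) : Decidable (IsCycleMap m f) :=
  inferInstanceAs (Decidable (∀ i ∈ range m, ∀ j ∈ range m, f i = f j → i = j))

/-- `d` is a junk value, unused for `n < l.length`. -/
def cycleOfList {V : Type*} (l : List V) (d : V) : ℕ → V :=
  fun n => l.getD n d

def k44Cycles : Fin 2 → ℕ → Fin 4 ⊕ Fin 4 :=
  ![cycleOfList [.inl 0, .inr 0, .inl 1, .inr 1, .inl 2, .inr 2, .inl 3, .inr 3] (.inl 0),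
    cycleOfList [.inl 0, .inr 2, .inl 1, .inr 3, .inl 2, .inr 0, .inl 3, .inr 1] (.inl 0)]

/-- Both cycles of `k44Cycles` pass through all eight vertices, so each one is an inside cycle
of the other. -/
theorem hasA2PDecomp_bipEdges_four_four : HasA2PDecomp (bipEdges 4 4) := by
  refine ⟨2, k44Cycles, ![k44Cycles 1, k44Cycles 0], ?_⟩
  unfold IsInsideOf
  decide

def k46Cycles : Fin 3 → ℕ → Fin 4 ⊕ Fin 6 :=
  ![cycleOfList [.inl 0, .inr 0, .inl 1, .inr 1, .inl 2, .inr 2, .inl 3, .inr 3] (.inl 0),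
    cycleOfList [.inl 0, .inr 1, .inl 3, .inr 0, .inl 2, .inr 4, .inl 1, .inr 5] (.inl 0),
    cycleOfList [.inl 0, .inr 2, .inl 1, .inr 3, .inl 2, .inr 5, .inl 3, .inr 4] (.inl 0)]

def k46InsideCycles : Fin 3 → ℕ → Fin 4 ⊕ Fin 6 :=
  ![cycleOfList [.inl 0, .inr 1, .inl 3, .inr 0, .inl 2, .inr 3, .inl 1, .inr 2] (.inl 0),
    cycleOfList [.inl 0, .inr 0, .inl 1, .inr 1, .inl 2, .inr 5, .inl 3, .inr 4] (.inl 0),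
    cycleOfList [.inl 0, .inr 3, .inl 3, .inr 2, .inl 2, .inr 4, .inl 1, .inr 5] (.inl 0)]

theorem hasA2PDecomp_bipEdges_four_six : HasA2PDecomp (bipEdges 4 6) := by
  refine ⟨3, k46Cycles, k46InsideCycles, ?_⟩
  unfold IsInsideOf
  decide

theorem a2p_K4t4s2_general (t s : ℕ) (hs : 0 < s) :
    HasA2PDecomp (bipEdges (4 * t) (4 * s + 2)) := by
  obtain ⟨s, rfl⟩ := Nat.exists_eq_add_one.2 hs
  have hright : HasA2PDecomp (bipEdges 4 (6 + 4 * s)) :=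
    hasA2PDecomp_bipEdges_four_six.bipEdges_add_right
      (hasA2PDecomp_bipEdges_four_four.bipEdges_mul_right s)
  rw [show 4 * (s + 1) + 2 = 6 + 4 * s by ring]
  exact hright.bipEdges_mul_left t

/-- `K_{4t,4s+2}` has an almost 2-perfect 8-cycle decomposition. -/
theorem a2p_K4t4s2 (t s : ℕ) (ht : 0 < t) (hs : 0 < s) :
    HasA2PDecomp (bipEdges (4 * t) (4 * s + 2)) :=
  a2p_K4t4s2_general t s hs
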